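/- arXiv:2112.12208 — 5 statements merged into one kernel-verified Lean document; each statement's English description precedes it below -/
import Mathlib

section
/- Let ξ > 0, σ ∈ ℝ, μ ∈ ℝ² and set s = |μ|² + (ξ + iσ)² ∈ ℂ (so Re s = |μ|² - σ² + ξ² and Im s = 2ξσ). If |μ| ≤ σ/√2 or |μ| ≥ √2·σ (with σ ≥ 0), then |s|^(1/2) ≥ (1/2)·ξ·(1 + |μ|²/ξ²)^(1/2). -/
open Real

theorem stmt_0 (ξ σ : ℝ) (μ : EuclideanSpace ℝ (Fin 2)) (hξ : 0 < ξ) (hσ : 0 ≤ σ)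
    (s : ℂ) (hs : s = ((‖μ‖ ^ 2 : ℝ) : ℂ) + (ξ + σ * Complex.I) ^ 2)
    (hsec : ‖μ‖ ≤ σ / Real.sqrt 2 ∨ ‖μ‖ ≥ Real.sqrt 2 * σ) :
    Real.sqrt ‖s‖ ≥ (1 / 2) * ξ * Real.sqrt (1 + ‖μ‖ ^ 2 / ξ ^ 2) := by
  have hm : (0:ℝ) ≤ ‖μ‖ := norm_nonneg _
  set m := ‖μ‖ with hmdef
  have hs2 : Real.sqrt 2 ^ 2 = 2 := Real.sq_sqrt (by norm_num)
  have hs2n : (0:ℝ) ≤ Real.sqrt 2 := Real.sqrt_nonneg 2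
  have hsec' : 2 * m^2 ≤ σ^2 ∨ m^2 ≥ 2 * σ^2 := by
    rcases hsec with h | h
    · left
      have h2 : (0:ℝ) < Real.sqrt 2 := by positivity
      have h3 : Real.sqrt 2 * m ≤ σ := by
        rw [div_eq_mul_inv] at h
        calc Real.sqrt 2 * m ≤ Real.sqrt 2 * (σ * (Real.sqrt 2)⁻¹) :=
              mul_le_mul_of_nonneg_left h hs2n
          _ = σ := by field_simp
      nlinarith [mul_nonneg hs2n hm]
    · right
      nlinarith [mul_nonneg hs2n hσ]
  have habs : ‖s‖ = Real.sqrt ((m^2+ξ^2-σ^2)^2 + (2*ξ*σ)^2) := by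
    rw [hs, Complex.norm_def, Complex.normSq_apply]
    simp [Complex.add_re, Complex.add_im, pow_two]
    ring_nf
  have key : ((1/4)*(ξ^2+m^2))^2 ≤ (m^2+ξ^2-σ^2)^2 + (2*ξ*σ)^2 := by
    rcases hsec' with h | h
    · nlinarith [sq_nonneg (σ^2 - 2*m^2), sq_nonneg ξ, sq_nonneg m,
        mul_nonneg (sub_nonneg.2 h) (sq_nonneg ξ),
        mul_nonneg (sub_nonneg.2 h) (sq_nonneg m),
        mul_nonneg (mul_nonneg (sq_nonneg m) (sq_nonneg ξ)) (sq_nonneg σ),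
        sq_nonneg (m*ξ), sq_nonneg (m^2 - ξ^2)]
    · nlinarith [sq_nonneg (m^2 - 2*σ^2), sq_nonneg ξ, sq_nonneg σ,
        mul_nonneg (sub_nonneg.2 h) (sq_nonneg ξ), sq_nonneg (m^2+ξ^2-σ^2),
        mul_nonneg (sub_nonneg.2 h) (sub_nonneg.2 h)]
  have hq : (0:ℝ) ≤ (1/4)*(ξ^2+m^2) := by positivity
  have habs2 : (1/4)*(ξ^2+m^2) ≤ ‖s‖ := by
    rw [habs]
    calc (1/4)*(ξ^2+m^2) = Real.sqrt (((1/4)*(ξ^2+m^2))^2) := (Real.sqrt_sq hq).symm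
      _ ≤ _ := Real.sqrt_le_sqrt key
  have hrhs : (1 / 2) * ξ * Real.sqrt (1 + m ^ 2 / ξ ^ 2)
      = Real.sqrt ((1/4)*(ξ^2+m^2)) := by
    have hξ' : ξ ≠ 0 := ne_of_gt hξ
    rw [show (1/4)*(ξ^2+m^2) = ((1/2)*ξ)^2 * (1 + m^2/ξ^2) by field_simp; ring,
      Real.sqrt_mul (sq_nonneg _), Real.sqrt_sq (by positivity)]
  rw [hrhs]
  exact Real.sqrt_le_sqrt habs2
end

section
/- Let ξ > 0, σ ≥ 0, μ ∈ ℝ², and define s = |μ|² + (ξ + iσ)² ∈ ℂ and the multiplier m = (ξ + iσ)/√s, where √s is the branch with positive real part. If |μ| ≤ σ/√2 or |μ| ≥ √2·σ, then |m| ≤ 2. -/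
open Real

theorem stmt_2 (ξ σ : ℝ) (μ : EuclideanSpace ℝ (Fin 2)) (hξ : 0 < ξ) (hσ : 0 ≤ σ)
    (s : ℂ) (hs : s = ((‖μ‖ ^ 2 : ℝ) : ℂ) + (ξ + σ * Complex.I) ^ 2)
    (z : ℂ) (hz : z ^ 2 = s) (hzre : 0 < z.re)
    (m : ℂ) (hm : m = (ξ + σ * Complex.I) / z)
    (hsec : ‖μ‖ ≤ σ / Real.sqrt 2 ∨ ‖μ‖ ≥ Real.sqrt 2 * σ) :
    ‖m‖ ≤ 2 := by
  set c : ℝ := ‖μ‖ ^ 2 with hc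
  have hc0 : 0 ≤ c := by positivity
  have hzne : z ≠ 0 := by
    intro h; rw [h] at hzre; simp at hzre
  -- real and imaginary parts of s
  have hre : s.re = c + ξ ^ 2 - σ ^ 2 := by
    rw [hs]; simp [Complex.add_re, pow_two, Complex.mul_re, Complex.mul_im]; ring
  have him : s.im = 2 * ξ * σ := by
    rw [hs]; simp [Complex.add_im, pow_two, Complex.mul_re, Complex.mul_im]; ring
  set A : ℝ := ‖s‖ with hA
  have hA0 : 0 ≤ A := norm_nonneg s
  have hApos : 0 < A := by
    have : s ≠ 0 := by rw [← hz]; exact pow_ne_zero 2 hzne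
    exact norm_pos_iff.mpr this
  have hAsq : A ^ 2 = (c + ξ ^ 2 - σ ^ 2) ^ 2 + (2 * ξ * σ) ^ 2 := by
    rw [hA, Complex.sq_norm, Complex.normSq_apply, hre, him]; ring
  -- case hypothesis rewritten
  have hcase : c ≤ σ ^ 2 / 2 ∨ c ≥ 2 * σ ^ 2 := by
    rcases hsec with h | h
    · left
      have h2 : (0:ℝ) < Real.sqrt 2 := by positivity
      have := mul_self_le_mul_self (norm_nonneg μ) h
      calc c = ‖μ‖ * ‖μ‖ := by rw [hc]; ring
        _ ≤ (σ / Real.sqrt 2) * (σ / Real.sqrt 2) := this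
        _ = σ ^ 2 / 2 := by
            rw [div_mul_div_comm, Real.mul_self_sqrt (by norm_num)]; ring
    · right
      have h2 : (0:ℝ) ≤ Real.sqrt 2 * σ := by positivity
      have := mul_self_le_mul_self h2 h
      calc (2:ℝ) * σ ^ 2 = (Real.sqrt 2 * σ) * (Real.sqrt 2 * σ) := by
            rw [mul_mul_mul_comm, Real.mul_self_sqrt (by norm_num)]; ring
        _ ≤ ‖μ‖ * ‖μ‖ := this
        _ = c := by rw [hc]; ring
  -- key inequality: ξ² + σ² ≤ 4 A
  have hkey : ξ ^ 2 + σ ^ 2 ≤ 4 * A := by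
    have hsq : (ξ ^ 2 + σ ^ 2) ^ 2 ≤ 16 * A ^ 2 := by
      rw [hAsq]
      rcases hcase with h | h
      · nlinarith [sq_nonneg (c + ξ ^ 2 - σ ^ 2), sq_nonneg ξ, sq_nonneg σ, sq_nonneg (ξ*σ),
          sq_nonneg (ξ^2 - σ^2), sq_nonneg (2*c + 2*ξ^2 - σ^2), mul_nonneg hc0 hσ,
          sq_nonneg (4*ξ^2 - σ^2), mul_nonneg hc0 (sq_nonneg ξ), mul_nonneg hc0 (sq_nonneg σ)]
      · nlinarith [sq_nonneg (c + ξ ^ 2 - σ ^ 2), sq_nonneg (ξ^2 + σ^2),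
          mul_nonneg hc0 (sq_nonneg ξ), mul_nonneg hc0 (sq_nonneg σ), sq_nonneg (ξ*σ)]
    nlinarith [sq_nonneg (ξ ^ 2 + σ ^ 2 - 4 * A), hApos]
  -- compute |m|
  have hmabs : ‖m‖ ^ 2 = (ξ ^ 2 + σ ^ 2) / A := by
    rw [hm, norm_div]
    have h1 : ‖(↑ξ + ↑σ * Complex.I)‖ ^ 2 = ξ ^ 2 + σ ^ 2 := by
      rw [Complex.sq_norm, Complex.normSq_apply]; simp; ring
    have h2 : ‖z‖ ^ 2 = A := by
      rw [hA, ← hz, norm_pow]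
    rw [div_pow, h1, h2]
  have hm2 : ‖m‖ ^ 2 ≤ 4 := by
    rw [hmabs, div_le_iff₀ hApos]; linarith
  nlinarith [norm_nonneg m, hm2]
end

section
/- Let ξ > 0, σ ≥ 0, μ ∈ ℝ², s = |μ|² + (ξ + iσ)², and m = (ξ + iσ)/√s. If σ/√2 < |μ| < √2·σ (characteristic sector), then |m| ≤ 2·(1 + |μ|²/ξ²)^(1/4). -/
open Real

set_option maxHeartbeats 1000000 in
theorem stmt_3 (ξ σ : ℝ) (μ : EuclideanSpace ℝ (Fin 2)) (hξ : 0 < ξ) (hσ : 0 ≤ σ)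
    (s : ℂ) (hs : s = ((‖μ‖ ^ 2 : ℝ) : ℂ) + (ξ + σ * Complex.I) ^ 2)
    (z : ℂ) (hz : z ^ 2 = s) (hzre : 0 < z.re)
    (m : ℂ) (hm : m = (ξ + σ * Complex.I) / z)
    (hsec : σ / Real.sqrt 2 < ‖μ‖ ∧ ‖μ‖ < Real.sqrt 2 * σ) :
    ‖m‖ ≤ 2 * (1 + ‖μ‖ ^ 2 / ξ ^ 2) ^ ((1 : ℝ) / 4) := by
  set N := ‖μ‖ with hNdef
  have hN : 0 ≤ N := norm_nonneg μ
  obtain ⟨hsec1, hsec2⟩ := hsec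
  have hs2 : (0:ℝ) < Real.sqrt 2 := by positivity
  have hσ0 : 0 < σ := by nlinarith
  -- σ < √2 * N
  have hσN : σ < Real.sqrt 2 * N := by
    have := mul_lt_mul_of_pos_left hsec1 hs2
    rwa [mul_div_cancel₀ _ (ne_of_gt hs2)] at this
  have hsqrt2le : Real.sqrt 2 ≤ 2 := by
    nlinarith [Real.sq_sqrt (by norm_num : (0:ℝ) ≤ 2), Real.sqrt_nonneg 2]
  have hz0 : z ≠ 0 := by
    intro h; rw [h] at hzre; simp at hzre
  set A := ‖s‖ with hAdef
  have hA0 : 0 ≤ A := norm_nonneg s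
  have hA2 : A ^ 2 = (N ^ 2 + ξ ^ 2 - σ ^ 2) ^ 2 + 4 * ξ ^ 2 * σ ^ 2 := by
    rw [hAdef, Complex.sq_norm, hs]
    simp [Complex.normSq_apply, pow_two, Complex.add_re, Complex.add_im,
      Complex.mul_re, Complex.mul_im]
    ring
  have hzA : ‖z‖ ^ 2 = A := by
    rw [← norm_pow, hz]
  have hApos : 0 < A := by
    rw [← hzA]
    exact pow_pos (norm_pos_iff.mpr hz0) 2
  have hw : ‖(ξ : ℂ) + σ * Complex.I‖ ^ 2 = ξ ^ 2 + σ ^ 2 := by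
    rw [Complex.sq_norm]
    simp [Complex.normSq_apply]
    ring
  have hm2 : ‖m‖ ^ 2 = (ξ ^ 2 + σ ^ 2) / A := by
    rw [hm, norm_div, div_pow, hw, hzA]
  have hc : (0:ℝ) ≤ 1 + N ^ 2 / ξ ^ 2 := by positivity
  have hRHSnn : 0 ≤ 2 * (1 + N ^ 2 / ξ ^ 2) ^ ((1:ℝ)/4) := by positivity
  have hR2 : (2 * (1 + N ^ 2 / ξ ^ 2) ^ ((1:ℝ)/4)) ^ 2
      = 4 * Real.sqrt (1 + N ^ 2 / ξ ^ 2) := by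
    rw [mul_pow, ← Real.rpow_natCast ((1 + N ^ 2 / ξ ^ 2) ^ ((1:ℝ)/4)) 2,
      ← Real.rpow_mul hc, Real.sqrt_eq_rpow]
    norm_num
  refine le_of_pow_le_pow_left₀ two_ne_zero hRHSnn ?_
  rw [hm2, hR2]
  have hsqrt1 : (1:ℝ) ≤ Real.sqrt (1 + N ^ 2 / ξ ^ 2) := by
    have h0 : (0:ℝ) ≤ N ^ 2 / ξ ^ 2 := by positivity
    have := Real.sqrt_le_sqrt (show (1:ℝ) ≤ 1 + N ^ 2 / ξ ^ 2 by linarith)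
    simpa using this
  rcases le_or_gt σ ξ with hcase | hcase
  · -- A ≥ ξ² + σ²
    have hAge : ξ ^ 2 + σ ^ 2 ≤ A := by
      refine le_of_pow_le_pow_left₀ two_ne_zero hA0 ?_
      nlinarith [sq_nonneg N, mul_nonneg (mul_nonneg (sq_nonneg N) (sq_nonneg N)) hN,
        mul_nonneg (sq_nonneg N) (sub_nonneg.mpr (by nlinarith : σ ^ 2 ≤ ξ ^ 2))]
    have h1 : (ξ ^ 2 + σ ^ 2) / A ≤ 1 := (div_le_one hApos).mpr hAge
    linarith
  · -- A ≥ 2ξσ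
    have hAge : 2 * ξ * σ ≤ A := by
      refine le_of_pow_le_pow_left₀ two_ne_zero hA0 ?_
      calc (2 * ξ * σ) ^ 2 = 0 + 4 * ξ ^ 2 * σ ^ 2 := by ring
        _ ≤ (N ^ 2 + ξ ^ 2 - σ ^ 2) ^ 2 + 4 * ξ ^ 2 * σ ^ 2 := by
            exact add_le_add (sq_nonneg _) le_rfl
        _ = A ^ 2 := hA2.symm
    have h2ξσ : (0:ℝ) < 2 * ξ * σ := by positivity
    have h1 : (ξ ^ 2 + σ ^ 2) / A ≤ (ξ ^ 2 + σ ^ 2) / (2 * ξ * σ) :=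
      div_le_div_of_nonneg_left (by positivity) h2ξσ hAge
    have h2 : (ξ ^ 2 + σ ^ 2) / (2 * ξ * σ) ≤ σ / ξ := by
      have hsq : ξ ^ 2 ≤ σ ^ 2 := pow_le_pow_left₀ hξ.le hcase.le 2
      have hkey : 0 ≤ ξ * (σ ^ 2 - ξ ^ 2) := mul_nonneg hξ.le (sub_nonneg.mpr hsq)
      rw [div_le_div_iff₀ h2ξσ hξ]
      nlinarith [hkey]
    have h3 : Real.sqrt (N ^ 2 / ξ ^ 2) = N / ξ := by
      rw [← div_pow, Real.sqrt_sq (by positivity)]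
    have h4 : N / ξ ≤ Real.sqrt (1 + N ^ 2 / ξ ^ 2) := by
      rw [← h3]
      exact Real.sqrt_le_sqrt (by linarith)
    have h5 : σ / ξ ≤ 4 * (N / ξ) := by
      rw [div_le_iff₀ hξ]
      have : σ ≤ 4 * N := by nlinarith
      calc σ ≤ 4 * N := this
        _ = 4 * (N / ξ) * ξ := by field_simp
    linarith
end

section
/- Let s = |μ|² + (ξ + iσ)² with ξ > 0, σ ≥ 0, μ ∈ ℝ², and let √s be the square root with positive real part. Then Re(√s) ≥ ξ/(2√2). -/
theorem stmt_7 (ξ σ : ℝ) (μ : EuclideanSpace ℝ (Fin 2)) (hξ : 0 < ξ) (hσ : 0 ≤ σ)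
    (s : ℂ) (hs : s = ((‖μ‖ ^ 2 : ℝ) : ℂ) + (ξ + σ * Complex.I) ^ 2)
    (z : ℂ) (hz : z ^ 2 = s) (hzre : 0 < z.re) :
    z.re ≥ ξ / (2 * Real.sqrt 2) := by
  subst hs
  rw [Complex.ext_iff] at hz
  obtain ⟨h1, h2⟩ := hz
  simp [pow_two, Complex.mul_re, Complex.mul_im, Complex.add_re, Complex.add_im,
    Complex.ofReal_re, Complex.ofReal_im, Complex.I_re, Complex.I_im] at h1 h2
  have hn : (0:ℝ) ≤ ‖μ‖ * ‖μ‖ := mul_nonneg (norm_nonneg _) (norm_nonneg _)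
  have hxy : z.re * z.im = ξ * σ := by linarith
  have key : (z.re ^ 2 - ξ ^ 2) * (z.re ^ 2 + σ ^ 2) = z.re ^ 2 * (‖μ‖ * ‖μ‖) := by
    linear_combination z.re ^ 2 * h1 + (z.re * z.im + ξ * σ) * hxy
  have hx2 : z.re ^ 2 ≥ ξ ^ 2 := by
    nlinarith [mul_pos hzre hzre, sq_nonneg σ, mul_nonneg (mul_pos hzre hzre).le hn]
  have hx : z.re ≥ ξ := by nlinarith
  have h2' : (1:ℝ) ≤ Real.sqrt 2 := by
    nlinarith [Real.sq_sqrt (by norm_num : (2:ℝ) ≥ 0), Real.sqrt_nonneg 2]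
  have : ξ / (2 * Real.sqrt 2) ≤ ξ := by
    apply div_le_self hξ.le; nlinarith
  linarith
end

section
/- Suppose ξ ≥ 1, σ ≥ 0, μ ∈ ℝ², and that σ/√2 < |μ| < √2σ. Then |m|² ≤ 4(1 + ξ^{−2})^{1/2} · (1 + |μ|²)^{1/2}, where m = (ξ + iσ)/√s and s = |μ|² + (ξ + iσ)². -/
theorem stmt_19 (ξ σ : ℝ) (μ : EuclideanSpace ℝ (Fin 2)) (hξ : 1 ≤ ξ) (hσ : 0 ≤ σ)
    (hsec : σ / Real.sqrt 2 < ‖μ‖ ∧ ‖μ‖ < Real.sqrt 2 * σ)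
    (s : ℂ) (hs : s = ((‖μ‖ ^ 2 : ℝ) : ℂ) + (ξ + σ * Complex.I) ^ 2)
    (z : ℂ) (hz : z ^ 2 = s) (hzre : 0 < z.re)
    (m : ℂ) (hm : m = (ξ + σ * Complex.I) / z) :
    ‖m‖ ^ 2 ≤ 4 * Real.sqrt (1 + ξ⁻¹ ^ 2) * Real.sqrt (1 + ‖μ‖ ^ 2) := by
  obtain ⟨h1, h2⟩ := hsec
  set r := ‖μ‖ with hr
  have hr0 : 0 ≤ r := norm_nonneg μ
  have hs2 : (0:ℝ) < Real.sqrt 2 := by positivity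
  have hs2sq : (Real.sqrt 2) ^ 2 = 2 := Real.sq_sqrt (by norm_num)
  have hσ0 : 0 < σ := by
    rcases lt_or_eq_of_le hσ with h | h
    · exact h
    · exfalso; rw [← h] at h2; simp at h2; linarith
  have hσr : σ < Real.sqrt 2 * r := by
    rw [div_lt_iff₀ hs2] at h1; linarith [mul_comm r (Real.sqrt 2)]
  have hσsq : σ ^ 2 < 2 * r ^ 2 := by nlinarith
  have hre : s.re = r ^ 2 + ξ ^ 2 - σ ^ 2 := by
    rw [hs]; simp [Complex.add_re, pow_two, Complex.mul_re]; ring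
  have him : s.im = 2 * ξ * σ := by
    rw [hs]; simp [Complex.add_im, pow_two, Complex.mul_im]; ring
  set A := ‖s‖ with hA
  have hA_im : 2 * ξ * σ ≤ A := by
    calc 2 * ξ * σ = s.im := him.symm
    _ ≤ |s.im| := le_abs_self _
    _ ≤ A := Complex.abs_im_le_norm s
  have hA_re : r ^ 2 + ξ ^ 2 - σ ^ 2 ≤ A := by
    calc r ^ 2 + ξ ^ 2 - σ ^ 2 = s.re := hre.symm
    _ ≤ |s.re| := le_abs_self _
    _ ≤ A := Complex.abs_re_le_norm s
  have hApos : 0 < A := lt_of_lt_of_le (by positivity) hA_im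
  have hz0 : z ≠ 0 := by
    intro h; rw [h] at hzre; simp at hzre
  have hAz : ‖z‖ ^ 2 = A := by rw [← norm_pow, hz]
  have hnum : ‖(ξ:ℂ) + σ * Complex.I‖ ^ 2 = ξ ^ 2 + σ ^ 2 := by
    rw [Complex.sq_norm, Complex.normSq_add_mul_I]
  have hmabs : ‖m‖ ^ 2 = (ξ ^ 2 + σ ^ 2) / A := by
    rw [hm, norm_div, div_pow, hnum, hAz]
  rw [hmabs, div_le_iff₀ hApos]
  have hs1 : 1 ≤ Real.sqrt (1 + ξ⁻¹ ^ 2) := by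
    have := Real.sqrt_le_sqrt (show (1:ℝ) ≤ 1 + ξ⁻¹ ^ 2 by nlinarith [sq_nonneg ξ⁻¹])
    rwa [Real.sqrt_one] at this
  have hs2' : 1 ≤ Real.sqrt (1 + r ^ 2) := by
    have := Real.sqrt_le_sqrt (show (1:ℝ) ≤ 1 + r ^ 2 by nlinarith)
    rwa [Real.sqrt_one] at this
  have hs3 : r ≤ Real.sqrt (1 + r ^ 2) := by
    have := Real.sqrt_le_sqrt (show r ^ 2 ≤ 1 + r ^ 2 by linarith)
    rwa [Real.sqrt_sq hr0] at this
  have hs1n : 0 ≤ Real.sqrt (1 + ξ⁻¹ ^ 2) := Real.sqrt_nonneg _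
  have hs2n : 0 ≤ Real.sqrt (1 + r ^ 2) := Real.sqrt_nonneg _
  rcases le_total σ ξ with hcase | hcase
  · nlinarith [mul_le_mul hs1 hs2' (by norm_num) hs1n,
      mul_le_mul_of_nonneg_right (mul_le_mul hs1 hs2' (by norm_num) hs1n) hApos.le,
      sq_nonneg (ξ - σ)]
  · have hsqrt2le : Real.sqrt 2 ≤ 2 := by
      have h4 : Real.sqrt 4 = 2 := by
        rw [show (4:ℝ) = 2 ^ 2 by norm_num, Real.sqrt_sq (by norm_num : (0:ℝ) ≤ 2)]
      calc Real.sqrt 2 ≤ Real.sqrt 4 := Real.sqrt_le_sqrt (by norm_num)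
      _ = 2 := h4
    have key : ξ ^ 2 + σ ^ 2 ≤ 8 * r * σ := by
      have p1 : σ * σ < Real.sqrt 2 * r * σ := mul_lt_mul_of_pos_right hσr hσ0
      have p2 : Real.sqrt 2 * (r * σ) ≤ 2 * (r * σ) :=
        mul_le_mul_of_nonneg_right hsqrt2le (mul_nonneg hr0 hσ0.le)
      have p3 : 0 ≤ (σ - ξ) * (σ + ξ) :=
        mul_nonneg (sub_nonneg.2 hcase) (by linarith)
      have p4 : 0 ≤ r * σ := mul_nonneg hr0 hσ0.le
      linarith [p1, p2, p3, p4]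
    calc ξ ^ 2 + σ ^ 2 ≤ 8 * r * σ := key
    _ = 4 * (r * (2 * 1 * σ)) := by ring
    _ ≤ 4 * (Real.sqrt (1 + r ^ 2) * (2 * ξ * σ)) := by gcongr
    _ ≤ 4 * (Real.sqrt (1 + r ^ 2) * A) := by gcongr
    _ ≤ (4 * (Real.sqrt (1 + r ^ 2) * A)) * Real.sqrt (1 + ξ⁻¹ ^ 2) :=
        le_mul_of_one_le_right (by positivity) hs1
    _ = 4 * Real.sqrt (1 + ξ⁻¹ ^ 2) * Real.sqrt (1 + r ^ 2) * A := by ring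
end
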